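/- Let d = 1 and let f(η) = ξ·1_{ξ<ℓ} + (2ℓ−ξ)·1_{ℓ≤ξ<2ℓ} with ξ(η) = inf{|x| : η(x) = 0} and ℓ = ⌈1/q⌉. Then the FA1f Dirichlet form satisfies D(f) = q(1−q)·Σ_{x∈ℤ} μ(c_x·(f(η^x)−f(η))²) ≤ 4q(1−q). -/

import Mathlib

/-!
A flip at `x` is allowed only when a neighbour `x ± 1` is empty, and it can move
`ξ = inf {|y| : η(y) = 0}` only when the nearest empty site is at distance `|x|` before or
after the flip; with the empty neighbour this forces `ξ(η), ξ(ηˣ) ∈ {|x|, |x| + 1}`. Since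
`f = min (ξ, 2ℓ - ξ)` is 1-Lipschitz in `ξ`, each nonzero term `c_x (f(ηˣ) - f(η))²` is at
most `1`, and for a fixed `η` at most four sites `x` have `ξ(η) ∈ {|x|, |x| + 1}`. So the integrand
summed over `x` is at most `4` pointwise; all terms are local, hence can be integrated over one
common window, which gives `D(f) ≤ 4q(1-q)` for every `ℓ`.
-/

open Finset

noncomputable section

/-- The configuration `η` flipped at site `x ∈ ℤ`. -/
def flipZ (η : ℤ → Bool) (x : ℤ) : ℤ → Bool :=
  fun y => if y = x then !(η y) else η y

/-- Extension of a configuration on a finite set of sites by fully occupied outside. -/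
def extendZ (s : Finset ℤ) (η : ↥s → Bool) : ℤ → Bool :=
  fun x => if h : x ∈ s then η ⟨x, h⟩ else true

/-- Expectation, under the product Bernoulli(1−q) measure (`true` = occupied, probability
`1−q`; `false` = empty, probability `q`), of a function depending only on sites in `s`. -/
def ElocZ (q : ℝ) (s : Finset ℤ) (g : (ℤ → Bool) → ℝ) : ℝ :=
  ∑ η : ↥s → Bool, (∏ v : ↥s, if η v then (1 - q) else q) * g (extendZ s η)

/-- The FA1f constraint on `ℤ` (as a real indicator): a neighbour of `x` is empty. -/
def cIndZ (η : ℤ → Bool) (x : ℤ) : ℝ :=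
  if η (x - 1) = false ∨ η (x + 1) = false then 1 else 0

/-- The FA1f Dirichlet form on `ℤ` of a function depending only on sites in `s`. -/
def DformZ (q : ℝ) (s : Finset ℤ) (f : (ℤ → Bool) → ℝ) : ℝ :=
  q * (1 - q) * ∑' x : ℤ,
    ElocZ q (s ∪ {x - 1, x, x + 1}) (fun η => cIndZ η x * (f (flipZ η x) - f η) ^ 2)

/-- `ξ(η) = inf{|x| : η(x) = 0}`, the distance from the origin to the nearest empty site. -/
def xiZ (η : ℤ → Bool) : ℕ :=
  sInf {k : ℕ | ∃ x : ℤ, x.natAbs = k ∧ η x = false}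

/-- The test function `f(η) = ξ·1_{ξ<ℓ} + (2ℓ−ξ)·1_{ℓ≤ξ<2ℓ}`. -/
def fPers (ℓ : ℕ) (η : ℤ → Bool) : ℝ :=
  if xiZ η < ℓ then (xiZ η : ℝ)
  else if xiZ η < 2 * ℓ then (2 * ℓ : ℝ) - (xiZ η : ℝ) else 0

/-- The window `{x : |x| ≤ 2ℓ}` on which `fPers ℓ` depends. -/
def windowZ (ℓ : ℕ) : Finset ℤ := Finset.Icc (-(2 * ℓ : ℤ)) (2 * ℓ : ℤ)

def LocZ (s : Finset ℤ) (g : (ℤ → Bool) → ℝ) : Prop :=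
  ∀ η η' : ℤ → Bool, (∀ y ∈ s, η y = η' y) → g η = g η'

lemma LocZ.mono {s t : Finset ℤ} {g : (ℤ → Bool) → ℝ} (h : LocZ s g) (hst : s ⊆ t) :
    LocZ t g :=
  fun η η' hagree => h η η' fun y hy => hagree y (hst hy)

lemma extendZ_of_mem {s : Finset ℤ} (η : ↥s → Bool) {x : ℤ} (h : x ∈ s) :
    extendZ s η x = η ⟨x, h⟩ := dif_pos h

lemma extendZ_of_notMem {s : Finset ℤ} (η : ↥s → Bool) {x : ℤ} (h : x ∉ s) :
    extendZ s η x = true := dif_neg h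

lemma ElocZ_eq_sum_extendZ (q : ℝ) (s : Finset ℤ) (g : (ℤ → Bool) → ℝ) :
    ElocZ q s g = ∑ η : ↥s → Bool,
      (∏ x ∈ s, if extendZ s η x then 1 - q else q) * g (extendZ s η) := by
  refine Finset.sum_congr rfl fun η _ => ?_
  rw [← Finset.prod_coe_sort s]
  simp only [extendZ_of_mem η (Subtype.prop _)]

def insertArrowBoolEquiv {a : ℤ} {u : Finset ℤ} (ha : a ∉ u) :
    Bool × (↥u → Bool) ≃ (↥(insert a u) → Bool) where
  toFun p v := if h : (v : ℤ) ∈ u then p.2 ⟨v, h⟩ else p.1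
  invFun η := (η ⟨a, Finset.mem_insert_self a u⟩, fun v => η ⟨v, Finset.mem_insert_of_mem v.2⟩)
  left_inv := fun ⟨b, σ⟩ => by
    ext v
    · exact dif_neg ha
    · exact dif_pos v.2
  right_inv η := by
    funext ⟨v, hv⟩
    dsimp only
    split_ifs with h
    · rfl
    · obtain rfl : v = a := by simpa [h] using hv
      rfl

lemma extendZ_insertArrowBoolEquiv {a : ℤ} {u : Finset ℤ} (ha : a ∉ u) (b : Bool)
    (σ : ↥u → Bool) :
    extendZ (insert a u) (insertArrowBoolEquiv ha (b, σ)) =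
      Function.update (extendZ u σ) a b := by
  funext x
  by_cases hxa : x = a
  · subst hxa
    rw [Function.update_self, extendZ_of_mem _ (Finset.mem_insert_self x u)]
    exact dif_neg ha
  · rw [Function.update_of_ne hxa]
    by_cases hxu : x ∈ u
    · rw [extendZ_of_mem _ (Finset.mem_insert_of_mem hxu), extendZ_of_mem _ hxu]
      exact dif_pos hxu
    · rw [extendZ_of_notMem _ hxu, extendZ_of_notMem]
      simp [hxa, hxu]

lemma ElocZ_insert {a : ℤ} {u : Finset ℤ} (ha : a ∉ u) (q : ℝ) {g : (ℤ → Bool) → ℝ}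
    (hg : LocZ u g) : ElocZ q (insert a u) g = ElocZ q u g := by
  have hterm : ∀ (b : Bool) (σ : ↥u → Bool),
      (∏ x ∈ insert a u,
          if extendZ (insert a u) (insertArrowBoolEquiv ha (b, σ)) x then 1 - q else q) *
        g (extendZ (insert a u) (insertArrowBoolEquiv ha (b, σ)))
      = (if b then 1 - q else q) *
        ((∏ x ∈ u, if extendZ u σ x then 1 - q else q) * g (extendZ u σ)) := by
    intro b σ
    have hu : ∀ x ∈ u, Function.update (extendZ u σ) a b x = extendZ u σ x :=
      fun x hx => Function.update_of_ne (ne_of_mem_of_not_mem hx ha) _ _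
    rw [extendZ_insertArrowBoolEquiv, Finset.prod_insert ha, Function.update_self,
      Finset.prod_congr rfl fun x hx => by rw [hu x hx], hg _ _ hu, mul_assoc]
  rw [ElocZ_eq_sum_extendZ, ElocZ_eq_sum_extendZ,
    ← (insertArrowBoolEquiv ha).sum_comp, Fintype.sum_prod_type]
  simp only [hterm, ← Finset.mul_sum, Fintype.sum_bool, if_true, Bool.false_eq_true, if_false]
  ring

lemma ElocZ_union_of_disjoint (q : ℝ) {s : Finset ℤ} {g : (ℤ → Bool) → ℝ} (hg : LocZ s g)
    {t : Finset ℤ} (hts : Disjoint t s) : ElocZ q (t ∪ s) g = ElocZ q s g := by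
  induction t using Finset.induction_on with
  | empty => rw [Finset.empty_union]
  | @insert a t ha ih =>
    rw [Finset.disjoint_insert_left] at hts
    rw [Finset.insert_union,
      ElocZ_insert (by simp [ha, hts.1]) q (hg.mono Finset.subset_union_right), ih hts.2]

lemma ElocZ_of_subset (q : ℝ) {s S : Finset ℤ} (hsS : s ⊆ S) {g : (ℤ → Bool) → ℝ}
    (hg : LocZ s g) : ElocZ q S g = ElocZ q s g := by
  rw [← ElocZ_union_of_disjoint q hg Finset.sdiff_disjoint, Finset.sdiff_union_of_subset hsS]

lemma ElocZ_const (q c : ℝ) (s : Finset ℤ) : ElocZ q s (fun _ => c) = c := by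
  rw [ElocZ, ← Finset.sum_mul,
    ← Fintype.prod_sum fun (_ : ↥s) (b : Bool) => if b then 1 - q else q]
  simp

lemma ElocZ_sum (q : ℝ) (s X : Finset ℤ) (G : ℤ → (ℤ → Bool) → ℝ) :
    ∑ x ∈ X, ElocZ q s (G x) = ElocZ q s (fun η => ∑ x ∈ X, G x η) := by
  simp only [ElocZ, Finset.mul_sum]
  exact Finset.sum_comm

lemma ElocZ_mono {q : ℝ} (hq0 : 0 ≤ q) (hq1 : q ≤ 1) (s : Finset ℤ)
    {g h : (ℤ → Bool) → ℝ} (hgh : ∀ η, g η ≤ h η) : ElocZ q s g ≤ ElocZ q s h :=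
  Finset.sum_le_sum fun η _ => mul_le_mul_of_nonneg_left (hgh _)
    (Finset.prod_nonneg fun v _ => by split <;> linarith)

section Configuration

variable {η ζ : ℤ → Bool} {x y : ℤ}

@[simp]
lemma flipZ_self : flipZ η x x = !η x := if_pos rfl

@[simp]
lemma flipZ_of_ne (h : y ≠ x) : flipZ η x y = η y := if_neg h

@[simp]
lemma flipZ_flipZ : flipZ (flipZ η x) x = η := by
  funext y
  by_cases h : y = x
  · subst h; simp
  · simp [h]

lemma xiZ_le (h : η y = false) : xiZ η ≤ y.natAbs :=
  Nat.sInf_le ⟨y, rfl, h⟩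

lemma exists_natAbs_eq_xiZ (h : η y = false) : ∃ z : ℤ, z.natAbs = xiZ η ∧ η z = false :=
  Nat.sInf_mem (s := {k | ∃ x : ℤ, x.natAbs = k ∧ η x = false}) ⟨y.natAbs, y, rfl, h⟩

/-- The empty site `y` rules out the junk value `xiZ ζ = sInf ∅ = 0`. -/
lemma xiZ_le_xiZ (hy : ζ y = false) (h : ∀ z, ζ z = false → η z = false) :
    xiZ η ≤ xiZ ζ := by
  obtain ⟨z, hz, hζz⟩ := exists_natAbs_eq_xiZ hy
  exact hz ▸ xiZ_le (h z hζz)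

lemma xiZ_eq_zero_of_forall_eq_true (h : ∀ y, η y = true) : xiZ η = 0 :=
  Nat.sInf_eq_zero.mpr <| Or.inr <| Set.eq_empty_of_forall_notMem fun _ ⟨y, _, hy⟩ => by
    simp [h y] at hy

lemma xiZ_le_xiZ_of_eqOn {m : ℕ} (hy : η y = false) (hym : y.natAbs ≤ m)
    (h : ∀ z, z.natAbs ≤ m → η z = ζ z) : xiZ ζ ≤ xiZ η := by
  obtain ⟨z, hz, hηz⟩ := exists_natAbs_eq_xiZ hy
  have hzm : z.natAbs ≤ m := hz ▸ (xiZ_le hy).trans hym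
  exact hz ▸ xiZ_le (h z hzm ▸ hηz)

lemma xiZ_eq_of_eqOn {m : ℕ} (hy : η y = false) (hym : y.natAbs ≤ m)
    (h : ∀ z, z.natAbs ≤ m → η z = ζ z) : xiZ η = xiZ ζ :=
  le_antisymm (xiZ_le_xiZ_of_eqOn (h y hym ▸ hy) hym fun z hz => (h z hz).symm)
    (xiZ_le_xiZ_of_eqOn hy hym h)

lemma natAbs_eq_xiZ_of_xiZ_flipZ_ne (hx : η x = false) (hy : y ≠ x) (hηy : η y = false)
    (hne : xiZ (flipZ η x) ≠ xiZ η) : x.natAbs = xiZ η ∧ xiZ η ≤ xiZ (flipZ η x) := by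
  have hle : xiZ η ≤ xiZ (flipZ η x) := by
    refine xiZ_le_xiZ (y := y) (by simpa [hy]) fun z hz => ?_
    by_cases hzx : z = x
    · exact hzx ▸ hx
    · simpa [hzx] using hz
  refine ⟨?_, hle⟩
  obtain ⟨z, hz, hηz⟩ := exists_natAbs_eq_xiZ hx
  by_cases hzx : z = x
  · rw [← hz, hzx]
  · exact absurd (le_antisymm (hz ▸ xiZ_le (by simpa [hzx])) hle) hne

lemma natAbs_le_xiZ_of_xiZ_flipZ_ne (hy : y ≠ x) (hηy : η y = false)
    (hne : xiZ (flipZ η x) ≠ xiZ η) : x.natAbs ≤ xiZ η ∧ x.natAbs ≤ xiZ (flipZ η x) := by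
  cases hx : η x
  · obtain ⟨h1, h2⟩ := natAbs_eq_xiZ_of_xiZ_flipZ_ne hx hy hηy hne
    omega
  · have := natAbs_eq_xiZ_of_xiZ_flipZ_ne (η := flipZ η x) (by simp [hx]) hy
      (by simpa [hy]) (by rwa [flipZ_flipZ, ne_comm])
    rw [flipZ_flipZ] at this
    omega

end Configuration

lemma fPers_eq_min (ℓ : ℕ) (η : ℤ → Bool) :
    fPers ℓ η = ((min (xiZ η) (2 * ℓ - xiZ η) : ℕ) : ℝ) := by
  unfold fPers
  split_ifs with h1 h2
  · rw [min_eq_left (by omega)]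
  · rw [min_eq_right (by omega), Nat.cast_sub (by omega)]
    push_cast; ring
  · rw [(by omega : 2 * ℓ - xiZ η = 0), Nat.min_zero, Nat.cast_zero]

lemma sq_fPers_sub_le_one (ℓ : ℕ) {η ζ : ℤ → Bool} (h1 : xiZ ζ ≤ xiZ η + 1)
    (h2 : xiZ η ≤ xiZ ζ + 1) : (fPers ℓ ζ - fPers ℓ η) ^ 2 ≤ 1 := by
  rw [sq_le_one_iff_abs_le_one, abs_sub_le_iff, fPers_eq_min, fPers_eq_min,
    sub_le_iff_le_add, sub_le_iff_le_add]
  constructor <;> norm_cast <;> omega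

lemma fPers_eq_zero_of_forall_eq_true (ℓ : ℕ) {η : ℤ → Bool}
    (h : ∀ y : ℤ, y.natAbs ≤ 2 * ℓ → η y = true) : fPers ℓ η = 0 := by
  have : xiZ η = 0 ∨ 2 * ℓ < xiZ η := by
    by_cases hη : ∀ y, η y = true
    · exact Or.inl (xiZ_eq_zero_of_forall_eq_true hη)
    · push Not at hη
      obtain ⟨y, hy⟩ := hη
      obtain ⟨z, hz, hηz⟩ := exists_natAbs_eq_xiZ (Bool.eq_false_iff.mpr hy)
      by_contra! hle
      simp [h z (by omega)] at hηz
  rw [fPers_eq_min, Nat.cast_eq_zero]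
  omega

lemma mem_windowZ {ℓ : ℕ} {x : ℤ} : x ∈ windowZ ℓ ↔ x.natAbs ≤ 2 * ℓ := by
  rw [windowZ, Finset.mem_Icc]
  omega

lemma locZ_fPers (ℓ : ℕ) : LocZ (windowZ ℓ) (fPers ℓ) := by
  intro η η' h
  replace h : ∀ y : ℤ, y.natAbs ≤ 2 * ℓ → η y = η' y := fun y hy => h y (mem_windowZ.mpr hy)
  by_cases hη : ∃ y : ℤ, y.natAbs ≤ 2 * ℓ ∧ η y = false
  · obtain ⟨y, hym, hy⟩ := hη
    rw [fPers_eq_min, fPers_eq_min, xiZ_eq_of_eqOn hy hym h]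
  · push Not at hη
    rw [fPers_eq_zero_of_forall_eq_true ℓ fun y hy => by simpa using hη y hy,
      fPers_eq_zero_of_forall_eq_true ℓ fun y hy => by simpa [← h y hy] using hη y hy]

lemma cIndZ_mul_sq_fPers_sub_le (ℓ : ℕ) (x : ℤ) (η : ℤ → Bool) :
    cIndZ η x * (fPers ℓ (flipZ η x) - fPers ℓ η) ^ 2 ≤
      if xiZ η = x.natAbs ∨ xiZ η = x.natAbs + 1 then 1 else 0 := by
  by_cases hc : η (x - 1) = false ∨ η (x + 1) = false
  swap
  · rw [cIndZ, if_neg hc, zero_mul]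
    split_ifs <;> norm_num
  obtain ⟨n, hnx, hn, hηn⟩ : ∃ n ≠ x, n.natAbs ≤ x.natAbs + 1 ∧ η n = false := by
    rcases hc with h | h
    exacts [⟨x - 1, by omega, by omega, h⟩, ⟨x + 1, by omega, by omega, h⟩]
  rw [cIndZ, if_pos hc, one_mul]
  by_cases heq : xiZ (flipZ η x) = xiZ η
  · rw [fPers_eq_min, fPers_eq_min, heq, sub_self]
    split_ifs <;> norm_num
  obtain ⟨h1, h2⟩ := natAbs_le_xiZ_of_xiZ_flipZ_ne hnx hηn heq
  have h3 := xiZ_le hηn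
  have h4 := xiZ_le (η := flipZ η x) (by simpa [hnx] : flipZ η x n = false)
  rw [if_pos (by omega)]
  exact sq_fPers_sub_le_one ℓ (by omega) (by omega)

lemma sum_ite_natAbs_le_four (X : Finset ℤ) (k : ℕ) :
    ∑ x ∈ X, (if k = x.natAbs ∨ k = x.natAbs + 1 then (1 : ℝ) else 0) ≤ 4 := by
  rw [Finset.sum_boole, Nat.cast_le_ofNat]
  refine (Finset.card_le_card fun x hx => ?_).trans
    (Finset.card_le_four (a := (k : ℤ)) (b := -k) (c := k - 1) (d := 1 - k))
  simp only [Finset.mem_filter] at hx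
  simp only [Finset.mem_insert, Finset.mem_singleton]
  omega

lemma sum_cIndZ_mul_sq_fPers_sub_le_four (ℓ : ℕ) (X : Finset ℤ) (η : ℤ → Bool) :
    ∑ x ∈ X, cIndZ η x * (fPers ℓ (flipZ η x) - fPers ℓ η) ^ 2 ≤ 4 :=
  (Finset.sum_le_sum fun x _ => cIndZ_mul_sq_fPers_sub_le ℓ x η).trans
    (sum_ite_natAbs_le_four X (xiZ η))

lemma DformZ_le {q : ℝ} (hq0 : 0 ≤ q) (hq1 : q ≤ 1) {s : Finset ℤ} {f : (ℤ → Bool) → ℝ}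
    (hf : LocZ s f) {C : ℝ}
    (hC : ∀ η, ∑ x ∈ s, cIndZ η x * (f (flipZ η x) - f η) ^ 2 ≤ C) :
    DformZ q s f ≤ q * (1 - q) * C := by
  set g : ℤ → (ℤ → Bool) → ℝ := fun x η => cIndZ η x * (f (flipZ η x) - f η) ^ 2
  have hg : ∀ x, LocZ (s ∪ {x - 1, x, x + 1}) (g x) := by
    intro x η η' h
    have hc : cIndZ η x = cIndZ η' x := by
      rw [cIndZ, cIndZ, h (x - 1) (by simp), h (x + 1) (by simp)]
    have hflip : f (flipZ η x) = f (flipZ η' x) := hf _ _ fun y hy => by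
      by_cases hyx : y = x
      · subst hyx; simp [h y (by simp)]
      · simp [hyx, h y (by simp [hy])]
    simp only [g, hc, hflip, hf η η' fun y hy => h y (by simp [hy])]
  have hout : ∀ x ∉ s, ElocZ q (s ∪ {x - 1, x, x + 1}) (g x) = 0 := by
    intro x hx
    have : g x = fun _ => 0 := funext fun η => by
      simp only [g, hf (flipZ η x) η fun y hy => flipZ_of_ne (ne_of_mem_of_not_mem hy hx),
        sub_self, zero_pow two_ne_zero, mul_zero]
    rw [this, ElocZ_const]
  -- a common window for all terms, so that their expectations can be added
  set S := s ∪ s.biUnion fun x => {x - 1, x, x + 1}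
  have hS : ∀ x ∈ s, s ∪ {x - 1, x, x + 1} ⊆ S := fun x hx =>
    Finset.union_subset_union_right
      (Finset.subset_biUnion_of_mem (fun x : ℤ => ({x - 1, x, x + 1} : Finset ℤ)) hx)
  have hE : ElocZ q S (fun η => ∑ x ∈ s, g x η) ≤ C :=
    (ElocZ_mono hq0 hq1 S hC).trans_eq (ElocZ_const q C S)
  unfold DformZ
  rw [tsum_eq_sum hout,
    Finset.sum_congr rfl fun x hx => (ElocZ_of_subset q (hS x hx) (hg x)).symm, ElocZ_sum]
  exact mul_le_mul_of_nonneg_left hE (mul_nonneg hq0 (by linarith))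

/-- for `d = 1`, `ℓ = ⌈1/q⌉`, the FA1f Dirichlet form of
`f(η) = ξ·1_{ξ<ℓ} + (2ℓ−ξ)·1_{ℓ≤ξ<2ℓ}` satisfies `D(f) ≤ 4q(1−q)`. -/
theorem dirichlet_fPers_le (q : ℝ) (hq0 : 0 < q) (hq1 : q < 1) :
    DformZ q (windowZ ⌈1 / q⌉₊) (fPers ⌈1 / q⌉₊) ≤ 4 * q * (1 - q) :=
  calc DformZ q (windowZ ⌈1 / q⌉₊) (fPers ⌈1 / q⌉₊) ≤ q * (1 - q) * 4 :=
        DformZ_le hq0.le hq1.le (locZ_fPers _) (sum_cIndZ_mul_sq_fPers_sub_le_four _ _)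
    _ = 4 * q * (1 - q) := by ring

end
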